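/- Let u : ℝ² → ℝ be defined by u(x) := Σ_{j=1}^{∞} i_j(x)·4^{−j} for x ∈ [0,1)² (and 0 outside), where i_j(x) ∈ {0,1,2,3} is the j-th quadrant digit of x. Then: (a) u is a fixed point of L, i.e. (Lu)(x) = u(x) for every x ∈ [0,1)²; (b) u is the unique fixed point of L in L¹([0,1)²): if w : ℝ² → ℝ is integrable on [0,1)² and (Lw)(x) = w(x) for Lebesgue-a.e. x ∈ [0,1)², then w = u Lebesgue-a.e. on [0,1)². -/

import Mathlib

open MeasureTheory Set Filter
open scoped ENNReal NNReal

noncomputable section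

/-- The half-open unit square `[0,1)²` in `ℝ²`. -/
def unitSq : Set (ℝ × ℝ) := Set.Ico (0:ℝ) 1 ×ˢ Set.Ico (0:ℝ) 1

/-- The four contractions `B₀, B₁, B₂, B₃` mapping `[0,1)²` onto its four half-open
dyadic subsquares (lower-left, lower-right, upper-left, upper-right). -/
def Bmap (i : Fin 4) (x : ℝ × ℝ) : ℝ × ℝ :=
  (x.1 / 2 + (if i.val % 2 = 1 then (1:ℝ)/2 else 0),
   x.2 / 2 + (if 2 ≤ i.val then (1:ℝ)/2 else 0))

/-- The inverse maps `A₀, A₁, A₂, A₃` of `B₀, …, B₃`. -/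
def Amap (i : Fin 4) (x : ℝ × ℝ) : ℝ × ℝ :=
  (2 * x.1 - (if i.val % 2 = 1 then (1:ℝ) else 0),
   2 * x.2 - (if 2 ≤ i.val then (1:ℝ) else 0))

/-- The four half-open dyadic subsquares `Q₀, Q₁, Q₂, Q₃` of `[0,1)²`. -/
def Qsub (i : Fin 4) : Set (ℝ × ℝ) := Bmap i '' unitSq

/-- The step function `ū = Σ_{i=0}^{3} (i/4)·1_{Q_i}`. -/
def ubar (x : ℝ × ℝ) : ℝ :=
  ∑ i : Fin 4, ((i.val : ℝ) / 4) * (Qsub i).indicator (fun _ => (1:ℝ)) x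

/-- The operator `L`: `(Lv)(x) = ū(x) + (1/4) Σ_i v(A_i x)·1_{Q_i}(x)` on `[0,1)²`,
extended by `0` outside. -/
def Lop (v : ℝ × ℝ → ℝ) : ℝ × ℝ → ℝ :=
  unitSq.indicator fun x =>
    ubar x + (1/4) * ∑ i : Fin 4, (Qsub i).indicator (fun y => v (Amap i y)) x

/-- The `j`-th binary digit `a_j(s) = ⌊2^j s⌋ − 2⌊2^{j−1} s⌋` of `s ∈ [0,1)` (`j ≥ 1`). -/
def bdigit (j : ℕ) (s : ℝ) : ℤ := ⌊(2:ℝ)^j * s⌋ - 2 * ⌊(2:ℝ)^(j-1) * s⌋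

/-- The `j`-th quadrant digit `i_j(x) = a_j(x₁) + 2 a_j(x₂) ∈ {0,1,2,3}` of `x ∈ [0,1)²`. -/
def qdigit (j : ℕ) (x : ℝ × ℝ) : ℤ := bdigit j x.1 + 2 * bdigit j x.2

/-- The Flat Mountain function `u(x) = Σ_{j≥1} i_j(x)·4^{−j}` on `[0,1)²`, `0` outside. -/
def uFM : ℝ × ℝ → ℝ :=
  unitSq.indicator fun x => ∑' j : ℕ, (qdigit (j+1) x : ℝ) / 4^(j+1)

/-- The iterates `u₀ = 0`, `u_{n+1} = L u_n`. -/
def uIter : ℕ → ℝ × ℝ → ℝ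
  | 0 => fun _ => 0
  | (n+1) => Lop (uIter n)

/-- The dyadic square `Q_{i₁,…,i_n} = B_{i₁} ∘ ⋯ ∘ B_{i_n} ([0,1)²)` indexed by a finite
sequence of quadrant digits. -/
def Qseq : List (Fin 4) → Set (ℝ × ℝ)
  | [] => unitSq
  | (i :: l) => Bmap i '' Qseq l

/-- The `j`-th base-4 digit `t_j = ⌊4^j t⌋ − 4⌊4^{j−1} t⌋` of `t ∈ [0,1)` (`j ≥ 1`). -/
def tdigit (j : ℕ) (t : ℝ) : ℤ := ⌊(4:ℝ)^j * t⌋ - 4 * ⌊(4:ℝ)^(j-1) * t⌋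

/-- The Lebesgue (Z-order) space-filling curve `γ`. -/
def lcurve (t : ℝ) : ℝ × ℝ :=
  (∑' j : ℕ, ((tdigit (j+1) t % 2 : ℤ) : ℝ) / 2^(j+1),
   ∑' j : ℕ, ((tdigit (j+1) t / 2 : ℤ) : ℝ) / 2^(j+1))

end

/-! On each quadrant `Q_i`, both `L v` and `u` satisfy `f x = i/4 + f (A_i x) / 4`: for `L v`
this is its definition, and for `u` it follows from `i₁(x) = i` and the digit shift
`i_{j+1}(x) = i_j(A_i x)`, so `u` is a fixed point. Since `A_i` maps `Q_i` onto `[0,1)²` and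
multiplies Lebesgue measure by `4`, `L` contracts the `L¹([0,1)²)` distance by the factor `1/4`,
which forces two integrable fixed points to agree almost everywhere. -/

lemma mem_unitSq {x : ℝ × ℝ} : x ∈ unitSq ↔ (0 ≤ x.1 ∧ x.1 < 1) ∧ (0 ≤ x.2 ∧ x.2 < 1) :=
  Iff.rfl

lemma Amap_apply (i : Fin 4) (x : ℝ × ℝ) :
    Amap i x = (2 * x.1 - (i.val % 2 : ℕ), 2 * x.2 - (i.val / 2 : ℕ)) := by
  fin_cases i <;> simp [Amap]

lemma Amap_Bmap (i : Fin 4) (x : ℝ × ℝ) : Amap i (Bmap i x) = x := by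
  fin_cases i <;> ext <;> simp [Amap, Bmap] <;> ring

lemma Bmap_Amap (i : Fin 4) (x : ℝ × ℝ) : Bmap i (Amap i x) = x := by
  fin_cases i <;> ext <;> simp [Amap, Bmap] <;> ring

lemma Qsub_eq_preimage (i : Fin 4) : Qsub i = Amap i ⁻¹' unitSq := by
  ext x
  refine ⟨?_, fun hx => ⟨Amap i x, hx, Bmap_Amap i x⟩⟩
  rintro ⟨y, hy, rfl⟩
  rwa [mem_preimage, Amap_Bmap]

lemma mem_Qsub_iff {i : Fin 4} {x : ℝ × ℝ} :
    x ∈ Qsub i ↔ ⌊2 * x.1⌋ = (i.val % 2 : ℕ) ∧ ⌊2 * x.2⌋ = (i.val / 2 : ℕ) := by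
  simp only [Qsub_eq_preimage, mem_preimage, Amap_apply, mem_unitSq, Int.floor_eq_iff,
    Int.cast_natCast]
  constructor <;> rintro ⟨⟨h1, h2⟩, h3, h4⟩ <;> refine ⟨⟨?_, ?_⟩, ?_, ?_⟩ <;> linarith

lemma Qsub_subset_unitSq (i : Fin 4) : Qsub i ⊆ unitSq := by
  rintro _ ⟨y, ⟨⟨h1, h2⟩, h3, h4⟩, rfl⟩
  fin_cases i <;> simp only [Bmap, mem_unitSq] <;> norm_num <;>
    constructor <;> constructor <;> linarith

lemma Qsub_unique {i k : Fin 4} {x : ℝ × ℝ} (hi : x ∈ Qsub i) (hk : x ∈ Qsub k) : i = k := by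
  rw [mem_Qsub_iff] at hi hk
  have h1 : i.val % 2 = k.val % 2 := by exact_mod_cast hi.1.symm.trans hk.1
  have h2 : i.val / 2 = k.val / 2 := by exact_mod_cast hi.2.symm.trans hk.2
  omega

lemma exists_mem_Qsub {x : ℝ × ℝ} (hx : x ∈ unitSq) : ∃ i, x ∈ Qsub i := by
  obtain ⟨⟨h1, h1'⟩, h2, h2'⟩ := hx
  simp only [mem_Qsub_iff, Int.floor_eq_iff, Int.cast_natCast]
  by_cases c1 : x.1 < 1/2 <;> by_cases c2 : x.2 < 1/2
  exacts [⟨0, by norm_num; constructor <;> constructor <;> linarith⟩,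
    ⟨2, by norm_num; constructor <;> constructor <;> linarith⟩,
    ⟨1, by norm_num; constructor <;> constructor <;> linarith⟩,
    ⟨3, by norm_num; constructor <;> constructor <;> linarith⟩]

lemma unitSq_eq_iUnion_Qsub : unitSq = ⋃ i, Qsub i :=
  (iUnion_subset Qsub_subset_unitSq).antisymm' fun _ hx => mem_iUnion.2 (exists_mem_Qsub hx)

lemma pairwise_disjoint_Qsub : Pairwise (Function.onFun Disjoint Qsub) :=
  fun _ _ hik => disjoint_left.2 fun _ hi hk => hik (Qsub_unique hi hk)

lemma measurableSet_unitSq : MeasurableSet unitSq :=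
  measurableSet_Ico.prod measurableSet_Ico

lemma continuous_Amap (i : Fin 4) : Continuous (Amap i) := by
  unfold Amap; fun_prop

lemma measurableSet_Qsub (i : Fin 4) : MeasurableSet (Qsub i) := by
  rw [Qsub_eq_preimage]; exact (continuous_Amap i).measurable measurableSet_unitSq

lemma bdigit_succ (m : ℕ) (s : ℝ) : bdigit (m + 1) s = ⌊2 * Int.fract (2 ^ m * s)⌋ := by
  have h : (2:ℝ) ^ (m + 1) * s = 2 * Int.fract (2 ^ m * s) + ((2 * ⌊2 ^ m * s⌋ : ℤ) : ℝ) := by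
    push_cast; rw [Int.fract]; ring
  rw [bdigit, Nat.add_sub_cancel, h, Int.floor_add_intCast]
  ring

lemma bdigit_nonneg (m : ℕ) (s : ℝ) : 0 ≤ bdigit (m + 1) s := by
  rw [bdigit_succ]
  exact Int.floor_nonneg.2 (by linarith [Int.fract_nonneg (2 ^ m * s)])

lemma bdigit_le_one (m : ℕ) (s : ℝ) : bdigit (m + 1) s ≤ 1 := by
  rw [bdigit_succ, ← Int.lt_add_one_iff, Int.floor_lt]
  push_cast
  linarith [Int.fract_lt_one (2 ^ m * s)]

lemma bdigit_two_mul_sub_intCast (j : ℕ) (s : ℝ) (a : ℤ) :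
    bdigit (j + 1) (2 * s - a) = bdigit (j + 2) s := by
  rw [bdigit_succ, bdigit_succ]
  congr 2
  rw [show (2:ℝ) ^ j * (2 * s - a) = 2 ^ (j + 1) * s - ((2 ^ j * a : ℤ) : ℝ) by push_cast; ring,
    Int.fract_sub_intCast]

lemma qdigit_nonneg (m : ℕ) (x : ℝ × ℝ) : 0 ≤ qdigit (m + 1) x := by
  have := bdigit_nonneg m x.1
  have := bdigit_nonneg m x.2
  rw [qdigit]; omega

lemma qdigit_le_three (m : ℕ) (x : ℝ × ℝ) : qdigit (m + 1) x ≤ 3 := by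
  have := bdigit_le_one m x.1
  have := bdigit_le_one m x.2
  rw [qdigit]; omega

lemma qdigit_Amap (j : ℕ) (i : Fin 4) (x : ℝ × ℝ) :
    qdigit (j + 1) (Amap i x) = qdigit (j + 2) x := by
  have h1 := bdigit_two_mul_sub_intCast j x.1 (i.val % 2 : ℕ)
  have h2 := bdigit_two_mul_sub_intCast j x.2 (i.val / 2 : ℕ)
  rw [Int.cast_natCast] at h1 h2
  rw [Amap_apply, qdigit, qdigit, h1, h2]

lemma qdigit_one_of_mem_Qsub {i : Fin 4} {x : ℝ × ℝ} (hx : x ∈ Qsub i) :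
    qdigit 1 x = i.val := by
  obtain ⟨⟨h1, h1'⟩, h2, h2'⟩ := Qsub_subset_unitSq i hx
  have hfl1 : ⌊x.1⌋ = 0 := Int.floor_eq_zero_iff.2 ⟨h1, h1'⟩
  have hfl2 : ⌊x.2⌋ = 0 := Int.floor_eq_zero_iff.2 ⟨h2, h2'⟩
  obtain ⟨hq1, hq2⟩ := mem_Qsub_iff.1 hx
  simp only [qdigit, bdigit, pow_one, Nat.sub_self, pow_zero, one_mul, hfl1, hfl2, hq1, hq2]
  omega

lemma summable_three_div_four_pow : Summable fun j : ℕ => (3:ℝ) / 4 ^ (j + 1) := by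
  simp_rw [div_eq_mul_inv, ← inv_pow]
  exact (summable_geometric_of_lt_one (by norm_num) (by norm_num)).comp_injective
    (add_left_injective 1) |>.mul_left 3

lemma norm_qdigit_div_le (j : ℕ) (x : ℝ × ℝ) :
    ‖(qdigit (j + 1) x : ℝ) / 4 ^ (j + 1)‖ ≤ 3 / 4 ^ (j + 1) := by
  have h0 : (0:ℝ) ≤ qdigit (j + 1) x := by exact_mod_cast qdigit_nonneg j x
  have h3 : (qdigit (j + 1) x : ℝ) ≤ 3 := by exact_mod_cast qdigit_le_three j x
  rw [Real.norm_of_nonneg (by positivity)]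
  gcongr

lemma summable_qdigit_div (x : ℝ × ℝ) :
    Summable fun j : ℕ => (qdigit (j + 1) x : ℝ) / 4 ^ (j + 1) :=
  summable_three_div_four_pow.of_norm_bounded (norm_qdigit_div_le · x)

lemma uFM_of_mem_unitSq {x : ℝ × ℝ} (hx : x ∈ unitSq) :
    uFM x = ∑' j : ℕ, (qdigit (j + 1) x : ℝ) / 4 ^ (j + 1) :=
  indicator_of_mem hx _

lemma uFM_of_mem_Qsub {i : Fin 4} {x : ℝ × ℝ} (hx : x ∈ Qsub i) :
    uFM x = i.val / 4 + uFM (Amap i x) / 4 := by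
  rw [uFM_of_mem_unitSq (Qsub_subset_unitSq i hx),
    uFM_of_mem_unitSq (by rwa [Qsub_eq_preimage] at hx),
    (summable_qdigit_div x).tsum_eq_zero_add, ← tsum_div_const]
  congr 1
  · rw [qdigit_one_of_mem_Qsub hx]; norm_num
  · congr 1 with j
    rw [qdigit_Amap, pow_succ _ (j + 1)]
    ring

lemma measurable_uFM : Measurable uFM := by
  refine Measurable.indicator ?_ measurableSet_unitSq
  refine measurable_of_tendsto_metrizable (fun n => ?_)
    (tendsto_pi_nhds.2 fun x => (summable_qdigit_div x).hasSum.tendsto_sum_nat)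
  simp only [qdigit, bdigit]
  fun_prop

lemma norm_uFM_le (x : ℝ × ℝ) : ‖uFM x‖ ≤ ∑' j : ℕ, (3:ℝ) / 4 ^ (j + 1) := by
  by_cases hx : x ∈ unitSq
  · rw [uFM_of_mem_unitSq hx]
    exact tsum_of_norm_bounded summable_three_div_four_pow.hasSum (norm_qdigit_div_le · x)
  · rw [uFM, indicator_of_notMem hx, norm_zero]
    exact tsum_nonneg fun j => by positivity

lemma integrableOn_uFM : IntegrableOn uFM unitSq := by
  have : IsFiniteMeasure (volume.restrict unitSq) :=
    isFiniteMeasure_restrict.2 ((Metric.isBounded_Ico (0:ℝ) 1).prod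
      (Metric.isBounded_Ico (0:ℝ) 1)).measure_lt_top.ne
  exact ⟨measurable_uFM.aestronglyMeasurable, .of_bounded (.of_forall norm_uFM_le)⟩

lemma sum_indicator_Qsub {M : Type*} [AddCommMonoid M] (f : Fin 4 → ℝ × ℝ → M) {i : Fin 4} {x : ℝ × ℝ} (hx : x ∈ Qsub i) :
    ∑ k, (Qsub k).indicator (f k) x = f i x := by
  rw [Finset.sum_eq_single_of_mem i (Finset.mem_univ i) fun k _ hki =>
    indicator_of_notMem (fun hk => hki (Qsub_unique hk hx)) _, indicator_of_mem hx]

lemma Lop_of_mem_Qsub (v : ℝ × ℝ → ℝ) {i : Fin 4} {x : ℝ × ℝ} (hx : x ∈ Qsub i) :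
    Lop v x = i.val / 4 + v (Amap i x) / 4 := by
  have hubar : ubar x = i.val / 4 := by
    simp_rw [ubar, ← indicator_const_mul]
    rw [sum_indicator_Qsub (fun k _ => (k.val : ℝ) / 4 * 1) hx, mul_one]
  rw [Lop, indicator_of_mem (Qsub_subset_unitSq i hx), hubar,
    sum_indicator_Qsub (fun k y => v (Amap k y)) hx]
  ring

lemma Lop_uFM {x : ℝ × ℝ} (hx : x ∈ unitSq) : Lop uFM x = uFM x := by
  obtain ⟨i, hi⟩ := exists_mem_Qsub hx
  rw [Lop_of_mem_Qsub uFM hi, uFM_of_mem_Qsub hi]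

lemma Amap_eq_smul_add (i : Fin 4) (x : ℝ × ℝ) : Amap i x = (2:ℝ) • x + Amap i 0 := by
  ext <;> simp [Amap_apply] <;> ring

lemma measurePreserving_Amap (i : Fin 4) :
    MeasurePreserving (Amap i) volume ((4:ℝ≥0∞)⁻¹ • volume) := by
  refine ⟨(continuous_Amap i).measurable, ?_⟩
  have : Amap i = (· + Amap i 0) ∘ ((2:ℝ) • ·) := funext (Amap_eq_smul_add i)
  rw [this, ← Measure.map_map (measurable_add_const _) (measurable_const_smul _),
    Measure.map_addHaar_smul _ two_ne_zero, Measure.map_smul, map_add_right_eq_self]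
  simp [show (2:ℝ≥0∞) ^ 2 = 4 by norm_num]

lemma measurableEmbedding_Amap (i : Fin 4) : MeasurableEmbedding (Amap i) :=
  (Homeomorph.mk ⟨Amap i, Bmap i, Bmap_Amap i, Amap_Bmap i⟩ (continuous_Amap i)
    (by unfold Bmap; fun_prop)).measurableEmbedding

lemma setLIntegral_Qsub_comp_Amap (i : Fin 4) (G : ℝ × ℝ → ℝ≥0∞) :
    ∫⁻ x in Qsub i, G (Amap i x) = 4⁻¹ * ∫⁻ x in unitSq, G x := by
  rw [Qsub_eq_preimage, (measurePreserving_Amap i).setLIntegral_comp_preimage_emb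
    (measurableEmbedding_Amap i), Measure.restrict_smul, lintegral_smul_measure, smul_eq_mul]

lemma lintegral_unitSq_eq_sum_Qsub (G : ℝ × ℝ → ℝ≥0∞) :
    ∫⁻ x in unitSq, G x = ∑ i, ∫⁻ x in Qsub i, G x := by
  rw [unitSq_eq_iUnion_Qsub, lintegral_iUnion measurableSet_Qsub pairwise_disjoint_Qsub,
    tsum_fintype]

lemma lintegral_enorm_Lop_sub (v w : ℝ × ℝ → ℝ) :
    ∫⁻ x in unitSq, ‖Lop v x - Lop w x‖ₑ = 4⁻¹ * ∫⁻ x in unitSq, ‖v x - w x‖ₑ := by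
  have hpiece (i : Fin 4) : ∫⁻ x in Qsub i, ‖Lop v x - Lop w x‖ₑ =
      4⁻¹ * (4⁻¹ * ∫⁻ x in unitSq, ‖v x - w x‖ₑ) := by
    rw [← setLIntegral_Qsub_comp_Amap, ← lintegral_const_mul' _ _ (by simp)]
    refine setLIntegral_congr_fun (measurableSet_Qsub i) fun x hx => ?_
    rw [Lop_of_mem_Qsub v hx, Lop_of_mem_Qsub w hx, add_sub_add_left_eq_sub, ← sub_div,
      div_eq_inv_mul, enorm_mul, enorm_inv four_ne_zero]
    simp [Real.enorm_eq_ofReal]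
  rw [lintegral_unitSq_eq_sum_Qsub, Finset.sum_congr rfl fun i _ => hpiece i, Finset.sum_const, Finset.card_univ, Fintype.card_fin, nsmul_eq_mul, Nat.cast_ofNat,
    ← mul_assoc, ENNReal.mul_inv_cancel four_ne_zero (by simp), one_mul]

lemma ae_eq_of_Lop_ae_eq_self {v w : ℝ × ℝ → ℝ} (hv : IntegrableOn v unitSq)
    (hw : IntegrableOn w unitSq) (hLv : ∀ᵐ x ∂volume.restrict unitSq, Lop v x = v x)
    (hLw : ∀ᵐ x ∂volume.restrict unitSq, Lop w x = w x) :
    ∀ᵐ x ∂volume.restrict unitSq, v x = w x := by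
  set I := ∫⁻ x in unitSq, ‖v x - w x‖ₑ
  have hI : I = 4⁻¹ * I := by
    rw [← lintegral_enorm_Lop_sub]
    refine lintegral_congr_ae ?_
    filter_upwards [hLv, hLw] with x hvx hwx
    rw [hvx, hwx]
  have hI_ne_top : I ≠ ⊤ := (hv.sub hw).hasFiniteIntegral.ne
  have hI_zero : I = 0 := by
    by_contra hI_ne_zero
    have := (ENNReal.mul_eq_left hI_ne_zero hI_ne_top).1 (by rw [mul_comm, ← hI])
    norm_num at this
  filter_upwards [(lintegral_eq_zero_iff' (hv.sub hw).aemeasurable.enorm).1 hI_zero] with x hx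
  simpa [sub_eq_zero] using hx

/-- The explicit base-4 digit series `u` is a fixed point of the contraction `L`, and it
is the unique fixed point of `L` in `L¹([0,1)²)` (up to a.e. equality). -/
theorem stmt7 :
    (∀ x ∈ unitSq, Lop uFM x = uFM x) ∧
    ∀ w : ℝ × ℝ → ℝ, IntegrableOn w unitSq volume →
      (∀ᵐ x ∂(volume.restrict unitSq), Lop w x = w x) →
      ∀ᵐ x ∂(volume.restrict unitSq), w x = uFM x := by
  refine ⟨fun x hx => Lop_uFM hx, fun w hw hLw => ?_⟩
  have hLu : ∀ᵐ x ∂volume.restrict unitSq, Lop uFM x = uFM x :=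
    (ae_restrict_mem measurableSet_unitSq).mono fun x hx => Lop_uFM hx
  exact ae_eq_of_Lop_ae_eq_self hw integrableOn_uFM hLw hLu
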